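/- (Flat Quadrilateral construction of interpolated parallel segments) Let X be a CAT(0) space and let Q₀, Q₁, P₀, P₁ ∈ X with d(Q₀, P₀) = d(Q₁, P₁) = L, and suppose the geodesic segments t ↦ (1−t)Q₀ + tP₀ and t ↦ (1−t)Q₁ + tP₁ are parallel, i.e., d((1−t)Q₀ + tP₀, (1−t)Q₁ + tP₁) = d(Q₀, Q₁) for all t ∈ [0,1]. For s ∈ [0,1] set Q_s = (1−s)Q₀ + sQ₁ and P_s = (1−s)P₀ + sP₁. Then for each s, d(Q_s, P_s) = L, and the segments t ↦ (1−t)Q_s + tP_s are pairwise parallel: d((1−t)Q_s + tP_s, (1−t)Q_{s'} + tP_{s'}) = d(Q_s, Q_{s'}) for all t, s, s' ∈ [0,1]. -/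

import Mathlib

/-!
Write `D = d(Q₀, Q₁)` and `h σ t` for the point at `σ` of the rung from `(1-t)Q₀ + tP₀` to
`(1-t)Q₁ + tP₁`. The point at `l` of the diagonal from `(1-a)Q₀ + aP₀` to `(1-b)Q₁ + bP₁` is
`h l ((1-l)a + lb)`: convexity puts it within `l D` and `(1-l) D` of the two ends of that rung,
which has length `D`. Hence, seen from a point of the first segment, the CN inequalities along the
second segment and along a rung bound the same quantity from both sides, and the squared length of
a diagonal is a quadratic polynomial in `b - a`, as in a Euclidean parallelogram. With these exact
lengths, CN at the midpoint of a rung bounds `d(h σ t, h σ t')` below by `|t - t'| L` for nearby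
`t, t'`; convexity bounds it above. In a CN space a curve that is locally a geodesic is a geodesic
(three overlapping pieces force the length of their union), and continuity reaches the endpoints.
So `t ↦ h s t` is the geodesic from `Q_s` to `P_s`, and the distance between the points at `t` of
two of them is read off a single rung.
-/

open Set

/-- The Bruhat–Tits CN inequality, which characterises CAT(0) spaces among geodesic spaces; it
forces `I P Q` to be a constant-speed geodesic from `P` to `Q` (`dist_apply_apply`). -/
def IsCNInterpolation {X : Type*} [MetricSpace X] (I : X → X → ℝ → X) : Prop :=
  ∀ P Q R, ∀ s ∈ Icc (0:ℝ) 1,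
    dist (I P Q s) R ^ 2 ≤ (1 - s) * dist P R ^ 2 + s * dist Q R ^ 2 - s * (1 - s) * dist P Q ^ 2

lemma one_sub_mul_add_mul_mem_Icc {a b l : ℝ} (ha : a ∈ Icc (0:ℝ) 1)
    (hb : b ∈ Icc (0:ℝ) 1) (hl : l ∈ Icc (0:ℝ) 1) : (1 - l) * a + l * b ∈ Icc (0:ℝ) 1 :=
  convex_Icc 0 1 ha hb (Icc.mem_iff_one_sub_mem.mp hl).1 hl.1 (by ring)

namespace IsCNInterpolation

variable {X : Type*} [MetricSpace X] {I : X → X → ℝ → X}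

theorem dist_left_apply_le (hI : IsCNInterpolation I) (P Q : X) {s : ℝ}
    (hs : s ∈ Icc (0:ℝ) 1) : dist P (I P Q s) ≤ s * dist P Q := by
  have h := hI P Q P s hs
  rw [dist_self, dist_comm Q P, dist_comm _ P] at h
  exact abs_le_of_sq_le_sq' (by nlinarith) (by have := hs.1; positivity) |>.2

theorem dist_apply_right_le (hI : IsCNInterpolation I) (P Q : X) {s : ℝ}
    (hs : s ∈ Icc (0:ℝ) 1) : dist (I P Q s) Q ≤ (1 - s) * dist P Q := by
  have h := hI P Q Q s hs
  rw [dist_self] at h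
  have hd := dist_nonneg (x := P) (y := Q)
  exact abs_le_of_sq_le_sq' (by nlinarith) (by have := hs.2; nlinarith) |>.2

theorem dist_left_apply (hI : IsCNInterpolation I) (P Q : X) {s : ℝ} (hs : s ∈ Icc (0:ℝ) 1) :
    dist P (I P Q s) = s * dist P Q := by
  linarith [hI.dist_left_apply_le P Q hs, hI.dist_apply_right_le P Q hs,
    dist_triangle P (I P Q s) Q]

theorem dist_apply_right (hI : IsCNInterpolation I) (P Q : X) {s : ℝ} (hs : s ∈ Icc (0:ℝ) 1) :
    dist (I P Q s) Q = (1 - s) * dist P Q := by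
  linarith [hI.dist_left_apply_le P Q hs, hI.dist_apply_right_le P Q hs,
    dist_triangle P (I P Q s) Q]

theorem apply_eq_of_dist (hI : IsCNInterpolation I) {P Q x : X} {s : ℝ} (hs : s ∈ Icc (0:ℝ) 1)
    (hP : dist P x = s * dist P Q) (hQ : dist x Q = (1 - s) * dist P Q) : I P Q s = x := by
  have h := hI P Q x s hs
  rw [hP, dist_comm Q x, hQ] at h
  exact dist_eq_zero.mp ((sq_nonpos_iff _).mp (by nlinarith))

theorem apply_zero (hI : IsCNInterpolation I) (P Q : X) : I P Q 0 = P :=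
  hI.apply_eq_of_dist (by norm_num) (by simp) (by simp)

theorem apply_one (hI : IsCNInterpolation I) (P Q : X) : I P Q 1 = Q :=
  hI.apply_eq_of_dist (by norm_num) (by simp) (by simp)

theorem apply_symm (hI : IsCNInterpolation I) (P Q : X) {s : ℝ} (hs : s ∈ Icc (0:ℝ) 1) :
    I P Q s = I Q P (1 - s) := by
  refine (hI.apply_eq_of_dist (Icc.mem_iff_one_sub_mem.mp hs) ?_ ?_).symm
  · rw [dist_comm, hI.dist_apply_right P Q hs, dist_comm]
  · rw [dist_comm, hI.dist_left_apply P Q hs, dist_comm]; ring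

theorem dist_apply_apply (hI : IsCNInterpolation I) (P Q : X) {s t : ℝ}
    (hs : s ∈ Icc (0:ℝ) 1) (ht : t ∈ Icc (0:ℝ) 1) :
    dist (I P Q s) (I P Q t) = |s - t| * dist P Q := by
  have hCN := hI P Q (I P Q t) s hs
  rw [hI.dist_left_apply P Q ht, dist_comm Q, hI.dist_apply_right P Q ht] at hCN
  have hlow₁ := dist_triangle P (I P Q s) (I P Q t)
  have hlow₂ := dist_triangle P (I P Q t) (I P Q s)
  rw [hI.dist_left_apply P Q hs, hI.dist_left_apply P Q ht] at hlow₁ hlow₂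
  rw [dist_comm (I P Q t)] at hlow₂
  have hd := dist_nonneg (x := P) (y := Q)
  apply le_antisymm
  · refine abs_le_of_sq_le_sq' ?_ (by positivity) |>.2
    rw [mul_pow, sq_abs]; nlinarith
  · rcases le_total s t with hst | hst
    · rw [abs_of_nonpos (by linarith)]; linarith
    · rw [abs_of_nonneg (by linarith)]; linarith

theorem apply_apply (hI : IsCNInterpolation I) (P Q : X) {a b l : ℝ} (ha : a ∈ Icc (0:ℝ) 1)
    (hb : b ∈ Icc (0:ℝ) 1) (hl : l ∈ Icc (0:ℝ) 1) :
    I (I P Q a) (I P Q b) l = I P Q ((1 - l) * a + l * b) := by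
  have hτ := one_sub_mul_add_mul_mem_Icc ha hb hl
  apply hI.apply_eq_of_dist hl
  · rw [hI.dist_apply_apply P Q ha hτ, hI.dist_apply_apply P Q ha hb,
      show a - ((1 - l) * a + l * b) = l * (a - b) by ring, abs_mul, abs_of_nonneg hl.1]
    ring
  · rw [hI.dist_apply_apply P Q hτ hb, hI.dist_apply_apply P Q ha hb,
      show (1 - l) * a + l * b - b = (1 - l) * (a - b) by ring, abs_mul,
      abs_of_nonneg (Icc.mem_iff_one_sub_mem.mp hl).1]
    ring

theorem dist_apply_le_left (hI : IsCNInterpolation I) (A B C : X) {l : ℝ}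
    (hl : l ∈ Icc (0:ℝ) 1) : dist (I A B l) (I A C l) ≤ l * dist B C := by
  have hAC := hI A C (I A B l) l hl
  have hAB := hI A B C l hl
  rw [hI.dist_left_apply A B hl, dist_comm C] at hAC
  refine abs_le_of_sq_le_sq' ?_ (by have := hl.1; positivity) |>.2
  rw [dist_comm]
  nlinarith [mul_le_mul_of_nonneg_left hAB hl.1]

theorem dist_apply_le_right (hI : IsCNInterpolation I) (A B C : X) {l : ℝ}
    (hl : l ∈ Icc (0:ℝ) 1) : dist (I A C l) (I B C l) ≤ (1 - l) * dist A B := by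
  rw [hI.apply_symm A C hl, hI.apply_symm B C hl]
  exact hI.dist_apply_le_left C A B (Icc.mem_iff_one_sub_mem.mp hl)

theorem dist_apply_le (hI : IsCNInterpolation I) (A B A' B' : X) {l : ℝ}
    (hl : l ∈ Icc (0:ℝ) 1) :
    dist (I A B l) (I A' B' l) ≤ (1 - l) * dist A A' + l * dist B B' := by
  linarith [dist_triangle (I A B l) (I A B' l) (I A' B' l),
    hI.dist_apply_le_left A B B' hl, hI.dist_apply_le_right A A' B' hl]


theorem dist_eq_three_mul (hI : IsCNInterpolation I) {x₀ x₁ x₂ x₃ : X} {r : ℝ}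
    (h₀₁ : dist x₀ x₁ = r) (h₁₂ : dist x₁ x₂ = r) (h₂₃ : dist x₂ x₃ = r)
    (h₀₂ : dist x₀ x₂ = 2 * r) (h₁₃ : dist x₁ x₃ = 2 * r) : dist x₀ x₃ = 3 * r := by
  have hmid : I x₁ x₃ (1/2) = x₂ :=
    hI.apply_eq_of_dist (by norm_num) (by rw [h₁₂, h₁₃]; ring) (by rw [h₂₃, h₁₃]; ring)
  have hCN := hI x₁ x₃ x₀ (1/2) (by norm_num)
  rw [hmid, h₁₃, dist_comm x₂, h₀₂, dist_comm x₁, h₀₁, dist_comm x₃] at hCN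
  have hr : 0 ≤ r := h₀₁ ▸ dist_nonneg
  refine le_antisymm ?_ (abs_le_of_sq_le_sq' (by nlinarith) dist_nonneg).2
  linarith [dist_triangle4 x₀ x₁ x₂ x₃]

theorem dist_eq_of_local_dist_eq (hI : IsCNInterpolation I) {γ : ℝ → X}
    {α β r L : ℝ} (hr : 0 < r)
    (hloc : ∀ u v, α ≤ u → u ≤ v → v ≤ β → v - u ≤ r → dist (γ u) (γ v) = (v - u) * L)
    {u v : ℝ} (hu : α ≤ u) (huv : u ≤ v) (hv : v ≤ β) : dist (γ u) (γ v) = (v - u) * L := by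
  suffices h : ∀ n : ℕ, ∀ u v, α ≤ u → u ≤ v → v ≤ β → v - u ≤ (3/2) ^ n * r →
      dist (γ u) (γ v) = (v - u) * L by
    obtain ⟨n, hn⟩ := pow_unbounded_of_one_lt ((v - u) / r) (by norm_num : (1:ℝ) < 3/2)
    exact h n u v hu huv hv ((div_lt_iff₀ hr).mp hn).le
  intro n
  induction n with
  | zero => simpa using hloc
  | succ n ih =>
    intro u v hu huv hv hlen
    obtain ⟨d, rfl⟩ : ∃ d, v = u + 3 * d := ⟨(v - u) / 3, by ring⟩
    have hshort : ∀ p q, α ≤ p → p ≤ q → q ≤ β → q - p ≤ 2 * d →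
        dist (γ p) (γ q) = (q - p) * L := fun p q hp hpq hq h =>
      ih p q hp hpq hq (by rw [pow_succ] at hlen; linarith)
    have hd : 0 ≤ d := by linarith
    have key := hI.dist_eq_three_mul (x₁ := γ (u + d)) (x₂ := γ (u + 2 * d)) (r := d * L)
      (by rw [hshort u (u + d) hu (by linarith) (by linarith) (by linarith)]; ring)
      (by rw [hshort (u + d) (u + 2 * d) (by linarith) (by linarith) (by linarith)
        (by linarith)]; ring)
      (by rw [hshort (u + 2 * d) (u + 3 * d) (by linarith) (by linarith) hv (by linarith)]; ring)
      (by rw [hshort u (u + 2 * d) hu (by linarith) (by linarith) (by linarith)]; ring)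
      (by rw [hshort (u + d) (u + 3 * d) (by linarith) (by linarith) hv (by linarith)]; ring)
    rw [key]; ring

end IsCNInterpolation

theorem dist_eq_of_forall_mem_Ioo {X : Type*} [MetricSpace X] {γ : ℝ → X} {α β L : ℝ}
    (hαβ : α < β) (hL : 0 ≤ L)
    (hlip : ∀ u ∈ Icc α β, ∀ v ∈ Icc α β, dist (γ u) (γ v) ≤ |u - v| * L)
    (hIoo : ∀ u ∈ Ioo α β, ∀ v ∈ Ioo α β, dist (γ u) (γ v) = |u - v| * L)
    {u v : ℝ} (hu : u ∈ Icc α β) (hv : v ∈ Icc α β) : dist (γ u) (γ v) = |u - v| * L := by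
  have hγ : ContinuousOn γ (Icc α β) :=
    (LipschitzOnWith.of_dist_le_mul fun u hu v hv => by
      rw [Real.coe_toNNReal L hL, Real.dist_eq, mul_comm]; exact hlip u hu v hv).continuousOn
  have hcont : ContinuousOn (fun p : ℝ × ℝ => dist (γ p.1) (γ p.2)) (Icc α β ×ˢ Icc α β) :=
    continuous_dist.comp_continuousOn ((hγ.comp continuousOn_fst mapsTo_fst_prod).prodMk
      (hγ.comp continuousOn_snd mapsTo_snd_prod))
  have hclosure : Icc α β ×ˢ Icc α β ⊆ closure (Ioo α β ×ˢ Ioo α β) := by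
    rw [closure_prod_eq, closure_Ioo hαβ.ne]
  refine Set.EqOn.of_subset_closure (fun p hp => hIoo p.1 hp.1 p.2 hp.2) hcont
    (by fun_prop) (prod_mono Ioo_subset_Icc_self Ioo_subset_Icc_self) hclosure
    (show (u, v) ∈ Icc α β ×ˢ Icc α β from ⟨hu, hv⟩)

structure ParallelSegments {X : Type*} [MetricSpace X] (I : X → X → ℝ → X)
    (Q₀ P₀ Q₁ P₁ : X) : Prop where
  dist_eq : dist Q₁ P₁ = dist Q₀ P₀
  dist_apply : ∀ t ∈ Icc (0:ℝ) 1, dist (I Q₀ P₀ t) (I Q₁ P₁ t) = dist Q₀ Q₁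

namespace ParallelSegments

variable {X : Type*} [MetricSpace X] {I : X → X → ℝ → X} {Q₀ P₀ Q₁ P₁ : X}

theorem symm (h : ParallelSegments I Q₀ P₀ Q₁ P₁) : ParallelSegments I Q₁ P₁ Q₀ P₀ where
  dist_eq := h.dist_eq.symm
  dist_apply t ht := by rw [dist_comm, h.dist_apply t ht, dist_comm]

theorem reverse (hI : IsCNInterpolation I) (h : ParallelSegments I Q₀ P₀ Q₁ P₁) :
    ParallelSegments I P₀ Q₀ P₁ Q₁ where
  dist_eq := by rw [dist_comm, h.dist_eq, dist_comm]
  dist_apply t ht := by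
    have h₁ := h.dist_apply 1 (by norm_num)
    rw [hI.apply_one, hI.apply_one] at h₁
    rw [hI.apply_symm P₀ Q₀ ht, hI.apply_symm P₁ Q₁ ht,
      h.dist_apply _ (Icc.mem_iff_one_sub_mem.mp ht), h₁]

theorem dist_top (hI : IsCNInterpolation I) (h : ParallelSegments I Q₀ P₀ Q₁ P₁) :
    dist P₀ P₁ = dist Q₀ Q₁ := by
  simpa [hI.apply_one] using h.dist_apply 1 (by norm_num)

variable (hI : IsCNInterpolation I) (h : ParallelSegments I Q₀ P₀ Q₁ P₁)
include hI h

theorem apply_diag {a b l : ℝ} (ha : a ∈ Icc (0:ℝ) 1) (hb : b ∈ Icc (0:ℝ) 1)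
    (hl : l ∈ Icc (0:ℝ) 1) :
    I (I Q₀ P₀ a) (I Q₁ P₁ b) l =
      I (I Q₀ P₀ ((1 - l) * a + l * b)) (I Q₁ P₁ ((1 - l) * a + l * b)) l := by
  have hτ := one_sub_mul_add_mul_mem_Icc ha hb hl
  have hleft := hI.dist_apply_le_left (I Q₀ P₀ a) (I Q₀ P₀ b) (I Q₁ P₁ b) hl
  have hright := hI.dist_apply_le_right (I Q₀ P₀ a) (I Q₁ P₁ a) (I Q₁ P₁ b) hl
  rw [hI.apply_apply Q₀ P₀ ha hb hl, h.dist_apply b hb] at hleft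
  rw [hI.apply_apply Q₁ P₁ ha hb hl, h.dist_apply a ha] at hright
  have htri := dist_triangle (I Q₀ P₀ ((1 - l) * a + l * b)) (I (I Q₀ P₀ a) (I Q₁ P₁ b) l)
    (I Q₁ P₁ ((1 - l) * a + l * b))
  rw [h.dist_apply _ hτ] at htri
  refine (hI.apply_eq_of_dist hl ?_ ?_).symm <;> rw [h.dist_apply _ hτ] <;> linarith

theorem dist_sq_diag {a b μ : ℝ} (ha : a ∈ Icc (0:ℝ) 1) (hb : b ∈ Icc (0:ℝ) 1)
    (hμ : μ ∈ Icc (0:ℝ) 1) :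
    dist (I Q₀ P₀ a) (I Q₁ P₁ ((1 - μ) * a + μ * b)) ^ 2 =
      (1 - μ) * dist Q₀ Q₁ ^ 2 + μ * dist (I Q₀ P₀ a) (I Q₁ P₁ b) ^ 2
        - μ * (1 - μ) * (b - a) ^ 2 * dist Q₀ P₀ ^ 2 := by
  have hτ := one_sub_mul_add_mul_mem_Icc ha hb hμ
  have hside := hI (I Q₁ P₁ a) (I Q₁ P₁ b) (I Q₀ P₀ a) μ hμ
  rw [hI.apply_apply Q₁ P₁ ha hb hμ, dist_comm (I Q₁ P₁ a), h.dist_apply a ha,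
    dist_comm (I Q₁ P₁ b), dist_comm (I Q₁ P₁ _), hI.dist_apply_apply Q₁ P₁ ha hb, h.dist_eq,
    mul_pow, sq_abs, sub_sq_comm] at hside
  have hrung := hI (I Q₀ P₀ ((1 - μ) * a + μ * b)) (I Q₁ P₁ ((1 - μ) * a + μ * b))
    (I Q₀ P₀ a) μ hμ
  rw [← h.apply_diag hI ha hb hμ, dist_comm, hI.dist_left_apply _ _ hμ,
    hI.dist_apply_apply Q₀ P₀ hτ ha, dist_comm (I Q₁ P₁ _), h.dist_apply _ hτ,
    show (1 - μ) * a + μ * b - a = μ * (b - a) by ring] at hrung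
  simp only [mul_pow, sq_abs] at hrung
  refine le_antisymm (hside.trans_eq (by ring)) ?_
  rcases hμ.1.eq_or_lt with rfl | hμpos
  · simp [h.dist_apply a ha]
  refine le_of_mul_le_mul_left ?_ hμpos
  nlinarith [hrung]

theorem dist_sq_diag_eq {a b : ℝ} (ha : a ∈ Icc (0:ℝ) 1) (hb : b ∈ Icc (0:ℝ) 1) (hab : a ≤ b) :
    dist (I Q₀ P₀ a) (I Q₁ P₁ b) ^ 2 =
      dist Q₀ Q₁ ^ 2 + (b - a) * (dist Q₀ P₁ ^ 2 - dist Q₀ Q₁ ^ 2 - dist Q₀ P₀ ^ 2)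
        + (b - a) ^ 2 * dist Q₀ P₀ ^ 2 := by
  have hback := h.symm.reverse hI |>.dist_sq_diag hI (a := 0) (b := 1) (μ := 1 - a)
    (by norm_num) (by norm_num) (Icc.mem_iff_one_sub_mem.mp ha)
  rw [show (1 - (1 - a)) * 0 + (1 - a) * 1 = 1 - a by ring, hI.apply_zero, hI.apply_one,
    hI.apply_symm P₀ Q₀ (Icc.mem_iff_one_sub_mem.mp ha), sub_sub_cancel, dist_comm P₁ P₀,
    h.dist_top hI, dist_comm P₁ Q₁, h.dist_eq, dist_comm P₁ Q₀, dist_comm P₁] at hback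
  rcases ha.2.eq_or_lt with rfl | ha1
  · rw [le_antisymm hb.2 hab, h.dist_apply 1 ha]; ring
  have hμ : (b - a) / (1 - a) ∈ Icc (0:ℝ) 1 :=
    ⟨div_nonneg (by linarith) (by linarith), (div_le_one (by linarith)).mpr (by linarith [hb.2])⟩
  have hforward := h.dist_sq_diag hI ha (b := 1) (by norm_num) hμ
  have hμa : (b - a) / (1 - a) * (1 - a) = b - a := div_mul_cancel₀ _ (by linarith)
  rw [show (1 - (b - a) / (1 - a)) * a + (b - a) / (1 - a) * 1 = b by linear_combination hμa,
    hI.apply_one] at hforward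
  rw [hforward, hback]
  linear_combination (dist Q₀ P₁ ^ 2 - dist Q₀ Q₁ ^ 2 - dist Q₀ P₀ ^ 2
    + ((b - a) / (1 - a) * (1 - a) + b - a) * dist Q₀ P₀ ^ 2) * hμa

theorem dist_apply_apply_le {σ t t' : ℝ} (hσ : σ ∈ Icc (0:ℝ) 1) (ht : t ∈ Icc (0:ℝ) 1)
    (ht' : t' ∈ Icc (0:ℝ) 1) :
    dist (I (I Q₀ P₀ t) (I Q₁ P₁ t) σ) (I (I Q₀ P₀ t') (I Q₁ P₁ t') σ) ≤
      |t - t'| * dist Q₀ P₀ := by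
  refine (hI.dist_apply_le _ _ _ _ hσ).trans_eq ?_
  rw [hI.dist_apply_apply Q₀ P₀ ht ht', hI.dist_apply_apply Q₁ P₁ ht ht', h.dist_eq]
  ring

theorem dist_apply_apply_eq_of_le_half {σ t t' : ℝ} (hσ₀ : 0 ≤ σ) (hσ : σ ≤ 1/2)
    (htt' : t ≤ t') (hleft : 2 * (t' - t) ≤ t) (hright : t' + (t' - t) ≤ 1) :
    dist (I (I Q₀ P₀ t) (I Q₁ P₁ t) σ) (I (I Q₀ P₀ t') (I Q₁ P₁ t') σ) =
      (t' - t) * dist Q₀ P₀ := by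
  have hσ' : σ ∈ Icc (0:ℝ) 1 := ⟨hσ₀, by linarith⟩
  have hμ : (1 + σ) / 2 ∈ Icc (0:ℝ) 1 := ⟨by linarith, by linarith⟩
  have ht : t ∈ Icc (0:ℝ) 1 := ⟨by linarith, by linarith⟩
  have ht' : t' ∈ Icc (0:ℝ) 1 := ⟨by linarith, by linarith⟩
  obtain ⟨w, hw⟩ : ∃ w, (1 - σ) * w = 2 * (t' - t) := ⟨_, mul_div_cancel₀ _ (by linarith)⟩
  have hw₀ : 0 ≤ w := by nlinarith
  have hσw : σ * w ≤ (1 - σ) * w := by nlinarith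
  have ha₁ : t - σ * w ∈ Icc (0:ℝ) 1 := ⟨by linarith, by nlinarith⟩
  have hb₁ : t + (1 - σ) * w ∈ Icc (0:ℝ) 1 := ⟨by nlinarith, by linarith⟩
  have ha₂ : t - σ * w / 2 ∈ Icc (0:ℝ) 1 := ⟨by linarith, by nlinarith⟩
  set R := I (I Q₀ P₀ t) (I Q₁ P₁ t) σ
  set R' := I (I Q₀ P₀ t') (I Q₁ P₁ t') σ
  -- CN for the upper part of the rung over `t'`, from `R'` to `I Q₁ P₁ t'`, seen from `R`: the
  -- two diagonals through `R` below reach its midpoint and its end, so all distances are known.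
  have hR₁ : I (I Q₀ P₀ (t - σ * w)) (I Q₁ P₁ (t + (1 - σ) * w)) σ = R := by
    rw [h.apply_diag hI ha₁ hb₁ hσ',
      show (1 - σ) * (t - σ * w) + σ * (t + (1 - σ) * w) = t by ring]
  have hmid_diag : I (I Q₀ P₀ (t - σ * w)) (I Q₁ P₁ (t + (1 - σ) * w)) ((1 + σ) / 2) =
      I (I Q₀ P₀ t') (I Q₁ P₁ t') ((1 + σ) / 2) := by
    rw [h.apply_diag hI ha₁ hb₁ hμ,
      show (1 - (1 + σ) / 2) * (t - σ * w) + (1 + σ) / 2 * (t + (1 - σ) * w) = t' by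
        linear_combination hw / 2]
  have hR₂ : I (I Q₀ P₀ (t - σ * w / 2)) (I Q₁ P₁ t') σ = R := by
    rw [h.apply_diag hI ha₂ ht' hσ',
      show (1 - σ) * (t - σ * w / 2) + σ * t' = t by linear_combination (-σ / 2) * hw]
  have hmid : I R' (I Q₁ P₁ t') (1 / 2) = I (I Q₀ P₀ t') (I Q₁ P₁ t') ((1 + σ) / 2) := by
    have := hI.apply_apply (I Q₀ P₀ t') (I Q₁ P₁ t') hσ' (b := 1) (by norm_num)
      (l := 1 / 2) (by norm_num)
    rw [hI.apply_one] at this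
    rw [this]; ring_nf
  have hmid_dist : dist (I R' (I Q₁ P₁ t') (1 / 2)) R =
      (1 - σ) / 2 * dist (I Q₀ P₀ (t - σ * w)) (I Q₁ P₁ (t + (1 - σ) * w)) := by
    rw [hmid, ← hmid_diag, ← hR₁, hI.dist_apply_apply _ _ hμ hσ',
      abs_of_nonneg (by linarith : 0 ≤ (1 + σ) / 2 - σ)]
    ring
  have hend_dist : dist (I Q₁ P₁ t') R = (1 - σ) * dist (I Q₀ P₀ (t - σ * w / 2)) (I Q₁ P₁ t') := by
    rw [← hR₂, dist_comm, hI.dist_apply_right _ _ hσ']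
  have hhalf_dist : dist R' (I Q₁ P₁ t') = (1 - σ) * dist Q₀ Q₁ := by
    rw [hI.dist_apply_right _ _ hσ', h.dist_apply t' ht']
  have hCN := hI R' (I Q₁ P₁ t') R (1 / 2) (by norm_num)
  rw [hmid_dist, hend_dist, hhalf_dist] at hCN
  have he₁ := h.dist_sq_diag_eq hI ha₁ hb₁ (by nlinarith)
  have he₂ := h.dist_sq_diag_eq hI ha₂ ht' (by nlinarith)
  rw [show t + (1 - σ) * w - (t - σ * w) = w by ring] at he₁
  rw [show t' - (t - σ * w / 2) = w / 2 by linear_combination -hw / 2] at he₂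
  simp only [mul_pow] at hCN
  rw [he₁, he₂] at hCN
  have hsq : ((1 - σ) * w) ^ 2 * dist Q₀ P₀ ^ 2 = (2 * (t' - t)) ^ 2 * dist Q₀ P₀ ^ 2 := by
    rw [hw]
  have hlow : ((t' - t) * dist Q₀ P₀) ^ 2 ≤ dist R R' ^ 2 := by
    rw [dist_comm R R']; nlinarith [hCN, hsq]
  have hup := h.dist_apply_apply_le hI hσ' ht ht'
  rw [abs_sub_comm, abs_of_nonneg (by linarith)] at hup
  exact le_antisymm hup (abs_le_of_sq_le_sq' hlow dist_nonneg).2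

theorem dist_apply_apply_eq_of_near {σ t t' : ℝ} (hσ : σ ∈ Icc (0:ℝ) 1)
    (htt' : t ≤ t') (hleft : 2 * (t' - t) ≤ t) (hright : t' + (t' - t) ≤ 1) :
    dist (I (I Q₀ P₀ t) (I Q₁ P₁ t) σ) (I (I Q₀ P₀ t') (I Q₁ P₁ t') σ) =
      (t' - t) * dist Q₀ P₀ := by
  rcases le_or_gt σ (1/2) with hσ₂ | hσ₂
  · exact h.dist_apply_apply_eq_of_le_half hI hσ.1 hσ₂ htt' hleft hright
  · have := h.symm.dist_apply_apply_eq_of_le_half hI (σ := 1 - σ) (by linarith [hσ.2])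
      (by linarith) htt' hleft hright
    rwa [← hI.apply_symm _ _ hσ, ← hI.apply_symm _ _ hσ, h.dist_eq] at this

theorem dist_apply_apply_eq {σ t t' : ℝ} (hσ : σ ∈ Icc (0:ℝ) 1) (ht : t ∈ Icc (0:ℝ) 1)
    (ht' : t' ∈ Icc (0:ℝ) 1) :
    dist (I (I Q₀ P₀ t) (I Q₁ P₁ t) σ) (I (I Q₀ P₀ t') (I Q₁ P₁ t') σ) =
      |t - t'| * dist Q₀ P₀ := by
  have hIoo : ∀ u ∈ Ioo (0:ℝ) 1, ∀ v ∈ Ioo (0:ℝ) 1, u ≤ v →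
      dist (I (I Q₀ P₀ u) (I Q₁ P₁ u) σ) (I (I Q₀ P₀ v) (I Q₁ P₁ v) σ) =
        (v - u) * dist Q₀ P₀ := fun u hu v hv huv =>
    hI.dist_eq_of_local_dist_eq (γ := fun t => I (I Q₀ P₀ t) (I Q₁ P₁ t) σ)
      (r := min (u / 2) (1 - v)) (lt_min (by linarith [hu.1]) (by linarith [hv.2]))
      (fun p q hp hpq hq hr => h.dist_apply_apply_eq_of_near hI hσ hpq
        (by linarith [min_le_left (u / 2) (1 - v)])
        (by linarith [min_le_right (u / 2) (1 - v)]))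
      le_rfl huv le_rfl
  refine dist_eq_of_forall_mem_Ioo zero_lt_one dist_nonneg
    (fun u hu v hv => h.dist_apply_apply_le hI hσ hu hv) (fun u hu v hv => ?_) ht ht'
  rcases le_total u v with huv | hvu
  · rw [hIoo u hu v hv huv, abs_sub_comm, abs_of_nonneg (by linarith)]
  · rw [dist_comm, hIoo v hv u hu hvu, abs_of_nonneg (by linarith)]

theorem dist_apply_bottom_apply_top {s : ℝ} (hs : s ∈ Icc (0:ℝ) 1) :
    dist (I Q₀ Q₁ s) (I P₀ P₁ s) = dist Q₀ P₀ := by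
  simpa [hI.apply_zero, hI.apply_one] using
    h.dist_apply_apply_eq hI hs (t := 0) (t' := 1) (by norm_num) (by norm_num)

theorem apply_apply_comm {s t : ℝ} (hs : s ∈ Icc (0:ℝ) 1) (ht : t ∈ Icc (0:ℝ) 1) :
    I (I Q₀ Q₁ s) (I P₀ P₁ s) t = I (I Q₀ P₀ t) (I Q₁ P₁ t) s := by
  have hbottom : I (I Q₀ P₀ 0) (I Q₁ P₁ 0) s = I Q₀ Q₁ s := by rw [hI.apply_zero, hI.apply_zero]
  have htop : I (I Q₀ P₀ 1) (I Q₁ P₁ 1) s = I P₀ P₁ s := by rw [hI.apply_one, hI.apply_one]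
  apply hI.apply_eq_of_dist ht
  · rw [h.dist_apply_bottom_apply_top hI hs, ← hbottom,
      h.dist_apply_apply_eq hI hs (by norm_num) ht, zero_sub, abs_neg, abs_of_nonneg ht.1]
  · rw [h.dist_apply_bottom_apply_top hI hs, ← htop,
      h.dist_apply_apply_eq hI hs ht (by norm_num), abs_of_nonpos (by linarith [ht.2])]
    ring

end ParallelSegments

theorem stmt_9_general {X : Type*} [MetricSpace X]
    (interp : X → X → ℝ → X)
    (hNPC : ∀ P Q R, ∀ s ∈ Set.Icc (0:ℝ) 1,
      dist (interp P Q s) R ^ 2 ≤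
        (1 - s) * dist P R ^ 2 + s * dist Q R ^ 2 - s * (1 - s) * dist P Q ^ 2)
    (Q₀ Q₁ P₀ P₁ : X) (L : ℝ)
    (hL0 : dist Q₀ P₀ = L) (hL1 : dist Q₁ P₁ = L)
    (hpar : ∀ t ∈ Set.Icc (0:ℝ) 1,
      dist (interp Q₀ P₀ t) (interp Q₁ P₁ t) = dist Q₀ Q₁) :
    (∀ s ∈ Set.Icc (0:ℝ) 1,
      dist (interp Q₀ Q₁ s) (interp P₀ P₁ s) = L) ∧
    (∀ s ∈ Set.Icc (0:ℝ) 1, ∀ s' ∈ Set.Icc (0:ℝ) 1, ∀ t ∈ Set.Icc (0:ℝ) 1,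
      dist (interp (interp Q₀ Q₁ s) (interp P₀ P₁ s) t)
           (interp (interp Q₀ Q₁ s') (interp P₀ P₁ s') t) =
        dist (interp Q₀ Q₁ s) (interp Q₀ Q₁ s')) := by
  have hI : IsCNInterpolation interp := hNPC
  have h : ParallelSegments interp Q₀ P₀ Q₁ P₁ := ⟨hL1.trans hL0.symm, hpar⟩
  subst hL0
  refine ⟨fun s hs => h.dist_apply_bottom_apply_top hI hs, fun s hs s' hs' t ht => ?_⟩
  rw [h.apply_apply_comm hI hs ht, h.apply_apply_comm hI hs' ht,
    hI.dist_apply_apply _ _ hs hs', h.dist_apply t ht, hI.dist_apply_apply _ _ hs hs']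

/-- Flat quadrilateral construction of interpolated parallel segments in a CAT(0)
space: if the segments from `Q₀` to `P₀` and from `Q₁` to `P₁` have the same length
`L` and are parallel, then the interpolated segments from `Q_s = (1-s)Q₀ + sQ₁` to
`P_s = (1-s)P₀ + sP₁` have length `L` and are pairwise parallel. -/
theorem stmt_9 {X : Type*} [MetricSpace X] [CompleteSpace X]
    (interp : X → X → ℝ → X)
    (h0 : ∀ P Q, interp P Q 0 = P) (h1 : ∀ P Q, interp P Q 1 = Q)
    (hgeo : ∀ P Q, ∀ s ∈ Set.Icc (0:ℝ) 1, ∀ t ∈ Set.Icc (0:ℝ) 1,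
      dist (interp P Q s) (interp P Q t) = |s - t| * dist P Q)
    (hNPC : ∀ P Q R, ∀ s ∈ Set.Icc (0:ℝ) 1,
      dist (interp P Q s) R ^ 2 ≤
        (1 - s) * dist P R ^ 2 + s * dist Q R ^ 2 - s * (1 - s) * dist P Q ^ 2)
    (Q₀ Q₁ P₀ P₁ : X) (L : ℝ)
    (hL0 : dist Q₀ P₀ = L) (hL1 : dist Q₁ P₁ = L)
    (hpar : ∀ t ∈ Set.Icc (0:ℝ) 1,
      dist (interp Q₀ P₀ t) (interp Q₁ P₁ t) = dist Q₀ Q₁) :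
    (∀ s ∈ Set.Icc (0:ℝ) 1,
      dist (interp Q₀ Q₁ s) (interp P₀ P₁ s) = L) ∧
    (∀ s ∈ Set.Icc (0:ℝ) 1, ∀ s' ∈ Set.Icc (0:ℝ) 1, ∀ t ∈ Set.Icc (0:ℝ) 1,
      dist (interp (interp Q₀ Q₁ s) (interp P₀ P₁ s) t)
           (interp (interp Q₀ Q₁ s') (interp P₀ P₁ s') t) =
        dist (interp Q₀ Q₁ s) (interp Q₀ Q₁ s')) :=
  stmt_9_general interp hNPC Q₀ Q₁ P₀ P₁ L hL0 hL1 hpar
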